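/- Suppose that R is a right Noetherian ring, S ∈ Den(R, 0) is a left and right denominator set with ass(S) = 0, and the ring S⁻¹R is left Noetherian (e.g. R is Noetherian). Then min(S⁻¹R) = { S⁻¹𝔭 | 𝔭 ∈ min(R,S) }; in particular min(R,S) ≠ ∅. -/

import Mathlib

/- Common framework: two-sided ideals, prime ideals, denominator sets and
   left localizations of (possibly noncommutative) rings, described
   axiomatically via their characteristic properties. -/

namespace BavulaMinPrimes

/-- A subset of a ring is a two-sided ideal. -/
def IsIdealSet {R : Type*} [Ring R] (I : Set R) : Prop :=
  (0 : R) ∈ I ∧ (∀ a ∈ I, ∀ b ∈ I, a + b ∈ I) ∧ (∀ a ∈ I, -a ∈ I) ∧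
    ∀ a ∈ I, ∀ r : R, r * a ∈ I ∧ a * r ∈ I

/-- A (two-sided) prime ideal: a proper ideal `P` such that `A * B ⊆ P`
implies `A ⊆ P` or `B ⊆ P` for all ideals `A`, `B`. -/
def IsPrimeIdealSet {R : Type*} [Ring R] (P : Set R) : Prop :=
  IsIdealSet P ∧ P ≠ Set.univ ∧
    ∀ A B : Set R, IsIdealSet A → IsIdealSet B →
      (∀ a ∈ A, ∀ b ∈ B, a * b ∈ P) → A ⊆ P ∨ B ⊆ P

/-- A completely prime ideal: the factor ring is a domain. -/
def IsCompletelyPrimeIdealSet {R : Type*} [Ring R] (P : Set R) : Prop :=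
  IsIdealSet P ∧ P ≠ Set.univ ∧ ∀ a b : R, a * b ∈ P → a ∈ P ∨ b ∈ P

/-- A minimal prime ideal of a ring. -/
def IsMinimalPrimeIdealSet {R : Type*} [Ring R] (P : Set R) : Prop :=
  IsPrimeIdealSet P ∧ ∀ P' : Set R, IsPrimeIdealSet P' → P' ⊆ P → P' = P

/-- A prime minimal over an ideal `A`. -/
def IsMinimalPrimeOver {R : Type*} [Ring R] (A P : Set R) : Prop :=
  IsPrimeIdealSet P ∧ A ⊆ P ∧
    ∀ P' : Set R, IsPrimeIdealSet P' → A ⊆ P' → P' ⊆ P → P' = P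

/-- The set `min(R)` of minimal primes of `R`. -/
def minPrimes (R : Type*) [Ring R] : Set (Set R) := { P | IsMinimalPrimeIdealSet P }

/-- The prime radical: intersection of all prime ideals. -/
def primeRadicalSet (R : Type*) [Ring R] : Set R :=
  { r : R | ∀ P : Set R, IsPrimeIdealSet P → r ∈ P }

/-- A ring is semiprime if its prime radical is zero. -/
def IsSemiprimeRing (R : Type*) [Ring R] : Prop := primeRadicalSet R = {0}

/-- A ring is prime if its zero ideal is a prime ideal. -/
def IsPrimeRing (R : Type*) [Ring R] : Prop := IsPrimeIdealSet ({0} : Set R)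

/-- A multiplicative subset: `1 ∈ S`, `0 ∉ S`, closed under multiplication. -/
def IsMulSet {R : Type*} [Ring R] (S : Set R) : Prop :=
  (1 : R) ∈ S ∧ (0 : R) ∉ S ∧ ∀ s ∈ S, ∀ t ∈ S, s * t ∈ S

/-- The left Ore condition: `S r ∩ R s ≠ ∅`. -/
def LeftOre {R : Type*} [Ring R] (S : Set R) : Prop :=
  ∀ r : R, ∀ s ∈ S, ∃ s' ∈ S, ∃ r' : R, s' * r = r' * s

/-- The right Ore condition: `r S ∩ s R ≠ ∅`. -/
def RightOre {R : Type*} [Ring R] (S : Set R) : Prop :=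
  ∀ r : R, ∀ s ∈ S, ∃ s' ∈ S, ∃ r' : R, r * s' = s * r'

/-- A left denominator set: a left Ore multiplicative set such that
`r s = 0` (with `s ∈ S`) implies `t r = 0` for some `t ∈ S`. -/
def IsLeftDenominatorSet {R : Type*} [Ring R] (S : Set R) : Prop :=
  IsMulSet S ∧ LeftOre S ∧ ∀ r : R, ∀ s ∈ S, r * s = 0 → ∃ t ∈ S, t * r = 0

/-- A right denominator set. -/
def IsRightDenominatorSet {R : Type*} [Ring R] (S : Set R) : Prop :=
  IsMulSet S ∧ RightOre S ∧ ∀ r : R, ∀ s ∈ S, s * r = 0 → ∃ t ∈ S, r * t = 0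

/-- `ass_l(S) = { r | s r = 0 for some s ∈ S }`. -/
def lAss {R : Type*} [Ring R] (S : Set R) : Set R := { r : R | ∃ s ∈ S, s * r = 0 }

/-- `f : R →+* Q` realizes `Q` as the left localization `S⁻¹R`:
elements of `S` become units, every element of `Q` is a left fraction
`(f s)⁻¹ (f r)`, and the kernel of `f` is `ass_l(S)`.  These properties
characterize `S⁻¹R` up to a unique `R`-isomorphism. -/
structure IsLeftLocalization {R Q : Type*} [Ring R] [Ring Q]
    (S : Set R) (f : R →+* Q) : Prop where
  isUnit : ∀ s ∈ S, IsUnit (f s)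
  surj : ∀ q : Q, ∃ s ∈ S, ∃ r : R, f s * q = f r
  ker : ∀ r : R, f r = 0 ↔ r ∈ lAss S

/-- `S⁻¹I = { s⁻¹ a | s ∈ S, a ∈ I }` as a subset of the localization `Q`:
`q ∈ S⁻¹I` iff `f s * q = f a` for some `s ∈ S`, `a ∈ I`. -/
def locSet {R Q : Type*} [Ring R] [Ring Q] (f : R →+* Q) (S : Set R)
    (I : Set R) : Set Q :=
  { q : Q | ∃ s ∈ S, ∃ a ∈ I, f s * q = f a }

/-- A normal element: `R n = n R`. -/
def IsNormalElement {R : Type*} [Ring R] (n : R) : Prop :=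
  (∀ r : R, ∃ r' : R, r * n = n * r') ∧ ∀ r : R, ∃ r' : R, n * r = r' * n

/-- A prime rich ring: every ideal contains a finite product of prime ideals
containing it (the empty product being the whole ring). -/
def IsPrimeRich (R : Type*) [Ring R] : Prop :=
  ∀ A : Set R, IsIdealSet A →
    ∃ (n : ℕ) (P : Fin n → Set R),
      (∀ i, IsPrimeIdealSet (P i) ∧ A ⊆ P i) ∧
      ∀ x : Fin n → R, (∀ i, x i ∈ P i) → (List.ofFn x).prod ∈ A

/-- An ideal which is finitely generated as a right `R`-module. -/
def IsFGRightIdeal {R : Type*} [Ring R] (I : Set R) : Prop :=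
  ∃ (m : ℕ) (g : Fin m → R), (∀ i, g i ∈ I) ∧
    ∀ x ∈ I, ∃ c : Fin m → R, x = ∑ i, g i * c i

/-! Since `S⁻¹R` is left Noetherian, its zero ideal contains a finite product of prime ideals
`P₁ ⋯ Pₙ` (Noetherian induction on two-sided ideals). As `R` embeds in `S⁻¹R`, the product of the
contractions `Pᵢ ∩ R` is zero, so every prime of `R` contains one of them; and the contraction of a
prime of `S⁻¹R` is prime, where left Noetherianity again makes `(f a) (f s)⁻¹` a left combination of
the `f (a sᵏ)`. Since moreover `S⁻¹(P ∩ R) = P`, contraction and extension are mutually inverse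
between minimal primes. -/

open Pointwise

section Ideals

variable {R : Type*} [Ring R] {B C D I P : Set R}

namespace IsIdealSet

lemma zero_mem (hI : IsIdealSet I) : (0 : R) ∈ I := hI.1

lemma add_mem (hI : IsIdealSet I) {a b : R} (ha : a ∈ I) (hb : b ∈ I) : a + b ∈ I :=
  hI.2.1 a ha b hb

lemma neg_mem (hI : IsIdealSet I) {a : R} (ha : a ∈ I) : -a ∈ I := hI.2.2.1 a ha

lemma mul_mem_left (hI : IsIdealSet I) (r : R) {a : R} (ha : a ∈ I) : r * a ∈ I :=
  (hI.2.2.2 a ha r).1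

lemma mul_mem_right (hI : IsIdealSet I) (r : R) {a : R} (ha : a ∈ I) : a * r ∈ I :=
  (hI.2.2.2 a ha r).2

lemma eq_univ_of_one_mem (hI : IsIdealSet I) (h1 : (1 : R) ∈ I) : I = Set.univ :=
  Set.eq_univ_of_forall fun r => by simpa using hI.mul_mem_left r h1

lemma preimage {Q : Type*} [Ring Q] (f : R →+* Q) {I : Set Q} (hI : IsIdealSet I) :
    IsIdealSet (f ⁻¹' I) := by
  refine ⟨?_, fun a ha b hb => ?_, fun a ha => ?_, fun a ha r => ⟨?_, ?_⟩⟩ <;>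
    simp only [Set.mem_preimage, map_zero, map_add, map_neg, map_mul] at *
  exacts [hI.zero_mem, hI.add_mem ha hb, hI.neg_mem ha, hI.mul_mem_left _ ha,
    hI.mul_mem_right _ ha]

lemma add (hB : IsIdealSet B) (hC : IsIdealSet C) : IsIdealSet (B + C) := by
  refine ⟨⟨0, hB.zero_mem, 0, hC.zero_mem, zero_add 0⟩, ?_, ?_, ?_⟩
  · rintro _ ⟨b, hb, c, hc, rfl⟩ _ ⟨b', hb', c', hc', rfl⟩
    exact ⟨b + b', hB.add_mem hb hb', c + c', hC.add_mem hc hc', add_add_add_comm b b' c c'⟩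
  · rintro _ ⟨b, hb, c, hc, rfl⟩
    exact ⟨-b, hB.neg_mem hb, -c, hC.neg_mem hc, (neg_add b c).symm⟩
  · rintro _ ⟨b, hb, c, hc, rfl⟩ r
    exact ⟨⟨r * b, hB.mul_mem_left r hb, r * c, hC.mul_mem_left r hc, (mul_add r b c).symm⟩,
      ⟨b * r, hB.mul_mem_right r hb, c * r, hC.mul_mem_right r hc, (add_mul b c r).symm⟩⟩

lemma ssubset_add (hB : IsIdealSet B) (hC : IsIdealSet C) (hCB : ¬ C ⊆ B) : B ⊂ B + C :=
  Set.ssubset_iff_subset_ne.mpr ⟨Set.subset_add_left B hC.zero_mem, fun h => hCB fun c hc =>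
    h ▸ ⟨0, hB.zero_mem, c, hc, zero_add c⟩⟩

lemma add_mul_add_mem (hB : IsIdealSet B) (hCD : ∀ c ∈ C, ∀ d ∈ D, c * d ∈ B) {x y : R}
    (hx : x ∈ B + C) (hy : y ∈ B + D) : x * y ∈ B := by
  obtain ⟨b, hb, c, hc, rfl⟩ := Set.mem_add.mp hx
  obtain ⟨b', hb', d, hd, rfl⟩ := Set.mem_add.mp hy
  rw [add_mul, mul_add c]
  exact hB.add_mem (hB.mul_mem_right _ hb)
    (hB.add_mem (hB.mul_mem_left c hb') (hCD c hc d hd))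

def toSubmodule (hI : IsIdealSet I) : Submodule R R where
  carrier := I
  add_mem' := hI.add_mem
  zero_mem' := hI.zero_mem
  smul_mem' r _ ha := hI.mul_mem_left r ha

@[elab_as_elim]
lemma induction [IsNoetherianRing R] {motive : Set R → Prop}
    (step : ∀ B, IsIdealSet B → (∀ C, IsIdealSet C → B ⊂ C → motive C) → motive B)
    (hI : IsIdealSet I) : motive I := by
  suffices h : ∀ N : Submodule R R, IsIdealSet (N : Set R) → motive N from h hI.toSubmodule hI
  intro N
  induction N using WellFoundedGT.induction with
  | _ N ih =>
    exact fun hN => step N hN fun C hC hNC =>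
      ih hC.toSubmodule (SetLike.coe_ssubset_coe.mp hNC) hC

end IsIdealSet

lemma isIdealSet_zero : IsIdealSet ({0} : Set R) := by
  refine ⟨rfl, ?_, ?_, ?_⟩ <;> simp +contextual

namespace IsPrimeIdealSet

lemma one_notMem (hP : IsPrimeIdealSet P) : (1 : R) ∉ P :=
  fun h1 => hP.2.1 (hP.1.eq_univ_of_one_mem h1)

lemma mem_or_mem (hP : IsPrimeIdealSet P) {a b : R} (h : ∀ r, a * r * b ∈ P) :
    a ∈ P ∨ b ∈ P := by
  -- ideals `A ∋ a` and `B ∋ b` with `A B ⊆ P`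
  let A : Set R := {x | ∀ r, x * r * b ∈ P}
  let B : Set R := {y | ∀ x ∈ A, x * y ∈ P}
  have hA : IsIdealSet A := by
    refine ⟨fun r => by simpa using hP.1.zero_mem, fun x hx y hy r => ?_,
      fun x hx r => ?_, fun x hx t => ⟨fun r => ?_, fun r => ?_⟩⟩
    · simpa [add_mul] using hP.1.add_mem (hx r) (hy r)
    · simpa using hP.1.neg_mem (hx r)
    · simpa [mul_assoc] using hP.1.mul_mem_left t (hx r)
    · simpa [mul_assoc] using hx (t * r)
  have hB : IsIdealSet B := by
    refine ⟨fun x _ => by simpa using hP.1.zero_mem, fun y hy z hz x hx => ?_,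
      fun y hy x hx => ?_, fun y hy t => ⟨fun x hx => ?_, fun x hx => ?_⟩⟩
    · simpa [mul_add] using hP.1.add_mem (hy x hx) (hz x hx)
    · simpa using hP.1.neg_mem (hy x hx)
    · simpa [mul_assoc] using hy (x * t) (hA.mul_mem_right t hx)
    · simpa [mul_assoc] using hP.1.mul_mem_right t (hy x hx)
  have hbB : b ∈ B := fun x hx => by simpa using hx 1
  exact (hP.2.2 A B hA hB fun x hx y hy => hy x hx).imp (fun h' => h' h) (fun h' => h' hbB)

lemma exists_subset_of_forall_prod_mem (hP : IsPrimeIdealSet P) :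
    ∀ {n : ℕ} {I : Fin n → Set R}, (∀ i, IsIdealSet (I i)) →
      (∀ x : Fin n → R, (∀ i, x i ∈ I i) → (List.ofFn x).prod ∈ P) → ∃ i, I i ⊆ P
  | 0, _, _, h => absurd (by simpa using h Fin.elim0 fun i => i.elim0) hP.one_notMem
  | n + 1, I, hI, h => by
    by_cases h0 : I 0 ⊆ P
    · exact ⟨0, h0⟩
    obtain ⟨a, ha, haP⟩ := Set.not_subset.mp h0
    have htail : ∀ y : Fin n → R, (∀ i, y i ∈ I i.succ) → (List.ofFn y).prod ∈ P := by
      refine fun y hy => (hP.mem_or_mem fun r => ?_).resolve_left haP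
      simpa [List.ofFn_succ, mul_assoc] using
        h (Fin.cons (a * r) y) (Fin.cases ((hI 0).mul_mem_right r ha) hy)
    obtain ⟨i, hi⟩ := exists_subset_of_forall_prod_mem hP (fun i => hI i.succ) htail
    exact ⟨i.succ, hi⟩

end IsPrimeIdealSet

lemma isPrimeIdealSet_of_forall_mem_or_mem (hP : IsIdealSet P) (h1 : (1 : R) ∉ P)
    (h : ∀ a b : R, (∀ r, a * r * b ∈ P) → a ∈ P ∨ b ∈ P) : IsPrimeIdealSet P := by
  refine ⟨hP, fun hu => h1 (hu ▸ trivial), fun A B hA hB hAB => ?_⟩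
  by_contra! hne
  obtain ⟨⟨a, ha, haP⟩, ⟨b, hb, hbP⟩⟩ := And.imp Set.not_subset.mp Set.not_subset.mp hne
  exact (h a b fun r => hAB _ (hA.mul_mem_right r ha) b hb).elim haP hbP

lemma isPrimeIdealSet_sInter_of_isChain {c : Set (Set R)} (hc : IsChain (· ⊆ ·) c)
    (hne : c.Nonempty) (hprime : ∀ P ∈ c, IsPrimeIdealSet P) : IsPrimeIdealSet (⋂₀ c) := by
  have hI : IsIdealSet (⋂₀ c) := by
    refine ⟨fun P hP => (hprime P hP).1.zero_mem, fun a ha b hb P hP => ?_,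
      fun a ha P hP => (hprime P hP).1.neg_mem (ha P hP), fun a ha r => ⟨fun P hP => ?_,
      fun P hP => (hprime P hP).1.mul_mem_right r (ha P hP)⟩⟩
    · exact (hprime P hP).1.add_mem (ha P hP) (hb P hP)
    · exact (hprime P hP).1.mul_mem_left r (ha P hP)
  obtain ⟨P₀, hP₀⟩ := hne
  refine isPrimeIdealSet_of_forall_mem_or_mem hI
    (fun h1 => (hprime P₀ hP₀).one_notMem (h1 P₀ hP₀)) fun a b h => ?_
  refine or_iff_not_imp_left.mpr fun ha => ?_
  obtain ⟨P₁, hP₁, haP₁⟩ : ∃ P₁ ∈ c, a ∉ P₁ := by simpa using ha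
  intro P hP
  -- in the smaller of `P` and `P₁`, `a` is missing, so `b` is there
  rcases hc.total hP hP₁ with hPP₁ | hP₁P
  · exact ((hprime P hP).mem_or_mem fun r => h r P hP).resolve_left fun haP => haP₁ (hPP₁ haP)
  · exact hP₁P (((hprime P₁ hP₁).mem_or_mem fun r => h r P₁ hP₁).resolve_left haP₁)

lemma exists_isMinimalPrimeIdealSet_subset {p : Set R} (hp : IsPrimeIdealSet p) :
    ∃ q, IsMinimalPrimeIdealSet q ∧ q ⊆ p := by
  obtain ⟨q, hqp, hq⟩ := zorn_superset_nonempty {P : Set R | IsPrimeIdealSet P}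
    (fun c hc hchain hne => ⟨⋂₀ c, isPrimeIdealSet_sInter_of_isChain hchain hne hc,
      fun _ => Set.sInter_subset_of_mem⟩) p hp
  exact ⟨q, ⟨hq.1, fun P hP hPq => (hq.2 hP hPq).antisymm' hPq⟩, hqp⟩

theorem isPrimeRich_of_isNoetherianRing [IsNoetherianRing R] : IsPrimeRich R := by
  refine fun A hA => IsIdealSet.induction (fun B hB ih => ?_) hA
  by_cases h1 : (1 : R) ∈ B
  · exact ⟨0, Fin.elim0, fun i => i.elim0, fun x _ => by simpa using h1⟩
  by_cases hBP : IsPrimeIdealSet B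
  · exact ⟨1, fun _ => B, fun _ => ⟨hBP, subset_rfl⟩, fun x hx => by simpa using hx 0⟩
  obtain ⟨C, D, hC, hD, hCD, hCB, hDB⟩ : ∃ C D, IsIdealSet C ∧ IsIdealSet D ∧
      (∀ c ∈ C, ∀ d ∈ D, c * d ∈ B) ∧ ¬ C ⊆ B ∧ ¬ D ⊆ B := by
    by_contra! h
    exact hBP ⟨hB, fun hu => h1 (hu ▸ trivial), fun C D hC hD hCD =>
      or_iff_not_imp_left.mpr (h C D hC hD hCD)⟩
  obtain ⟨n₁, P₁, hP₁, hprod₁⟩ := ih _ (hB.add hC) (hB.ssubset_add hC hCB)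
  obtain ⟨n₂, P₂, hP₂, hprod₂⟩ := ih _ (hB.add hD) (hB.ssubset_add hD hDB)
  refine ⟨n₁ + n₂, Fin.append P₁ P₂, fun i => ?_, fun x hx => ?_⟩
  · refine Fin.addCases (fun i => ?_) (fun i => ?_) i
    · simpa using ⟨(hP₁ i).1, (Set.subset_add_left B hC.zero_mem).trans (hP₁ i).2⟩
    · simpa using ⟨(hP₂ i).1, (Set.subset_add_left B hD.zero_mem).trans (hP₂ i).2⟩
  · rw [List.ofFn_add, List.prod_append]
    exact hB.add_mul_add_mem hCD
      (hprod₁ _ fun i => by simpa using hx (Fin.castLE (Nat.le_add_right n₁ n₂) i))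
      (hprod₂ _ fun i => by simpa using hx (Fin.natAdd n₁ i))

lemma minPrimes_nonempty [Nontrivial R] [IsNoetherianRing R] : (minPrimes R).Nonempty := by
  obtain ⟨n, P, hP, hprod⟩ := isPrimeRich_of_isNoetherianRing ({0} : Set R) isIdealSet_zero
  cases n with
  | zero => exact (one_ne_zero (α := R) (by simpa using hprod Fin.elim0 fun i => i.elim0)).elim
  | succ n =>
    obtain ⟨q, hq, -⟩ := exists_isMinimalPrimeIdealSet_subset (hP 0).1
    exact ⟨q, hq⟩

end Ideals

/- The left ideals `N n = Q x + Q x u⁻¹ + ⋯ + Q x u⁻ⁿ` stabilize, so `x u⁻⁽ⁿ⁺¹⁾ ∈ N n`;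
multiplying on the right by `uⁿ` gives the claim. -/
lemma mul_inv_mem_span_mul_pow {Q : Type*} [Ring Q] [IsNoetherianRing Q] (x : Q) (u : Qˣ) :
    x * ↑u⁻¹ ∈ Submodule.span Q (Set.range fun k : ℕ => x * ↑(u ^ k)) := by
  let N : ℕ →o Submodule Q Q :=
    ⟨fun n => Submodule.span Q ((fun i => x * ↑(u⁻¹ ^ i)) '' Set.Iic n),
      fun _ _ hmn => Submodule.span_mono (Set.image_mono (Set.Iic_subset_Iic.mpr hmn))⟩
  obtain ⟨n, hn⟩ := monotone_stabilizes_iff_noetherian.mpr inferInstance N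
  have hstab : x * ↑(u⁻¹ ^ (n + 1)) ∈ N n :=
    hn (n + 1) n.le_succ ▸ Submodule.subset_span ⟨n + 1, Set.mem_Iic.mpr le_rfl, rfl⟩
  have hmap : ∀ y ∈ N n,
      y * ↑(u ^ n) ∈ Submodule.span Q (Set.range fun k : ℕ => x * ↑(u ^ k)) := by
    refine fun y hy => Submodule.span_induction ?_ (by simp) (fun _ _ _ _ h₁ h₂ => ?_)
      (fun q _ _ h => ?_) hy
    · rintro _ ⟨i, hi, rfl⟩
      refine Submodule.subset_span ⟨n - i, ?_⟩
      rw [mul_assoc, ← Units.val_mul, inv_pow, (Commute.pow_pow_self u i n).inv_left.eq,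
        ← pow_sub _ hi]
    · simpa [add_mul] using add_mem h₁ h₂
    · simpa [mul_assoc] using Submodule.smul_mem _ q h
  have hcancel : x * ↑(u⁻¹ ^ (n + 1)) * ↑(u ^ n) = x * ↑u⁻¹ := by
    rw [mul_assoc, ← Units.val_mul, pow_succ', mul_assoc, inv_pow, inv_mul_cancel, mul_one]
  exact hcancel ▸ hmap _ hstab

section Localization

variable {R Q : Type*} [Ring R] [Ring Q] {S : Set R} {f : R →+* Q} {P : Set Q}

lemma exists_preimage_subset_of_injective [IsNoetherianRing Q] (hinj : Function.Injective f)
    {p : Set R} (hp : IsPrimeIdealSet p) : ∃ P, IsPrimeIdealSet P ∧ f ⁻¹' P ⊆ p := by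
  obtain ⟨n, P, hP, hprod⟩ := isPrimeRich_of_isNoetherianRing ({0} : Set Q) isIdealSet_zero
  have hprod_mem : ∀ x : Fin n → R, (∀ i, x i ∈ f ⁻¹' P i) → (List.ofFn x).prod ∈ p := by
    intro x hx
    have hfx : f (List.ofFn x).prod = f 0 := by
      simpa [map_list_prod, List.map_ofFn] using hprod (f ∘ x) hx
    exact hinj hfx ▸ hp.1.zero_mem
  obtain ⟨i, hi⟩ := hp.exists_subset_of_forall_prod_mem (fun i => (hP i).1.1.preimage f) hprod_mem
  exact ⟨P i, (hP i).1, hi⟩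

lemma locSet_mono {I J : Set R} (h : I ⊆ J) : locSet f S I ⊆ locSet f S J :=
  fun _ ⟨s, hs, a, ha, hq⟩ => ⟨s, hs, a, h ha, hq⟩

namespace IsLeftLocalization

variable (hf : IsLeftLocalization S f)
include hf

lemma injective (hass : lAss S = {0}) : Function.Injective f :=
  (injective_iff_map_eq_zero f).mpr fun r hr => by simpa [hass] using (hf.ker r).mp hr

lemma nontrivial (hS : IsMulSet S) (hass : lAss S = {0}) : Nontrivial Q :=
  have : Nontrivial R := ⟨⟨1, 0, fun h => hS.2.1 (h ▸ hS.1)⟩⟩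
  (hf.injective hass).nontrivial

lemma eq_inv_mul {s : R} (hs : s ∈ S) {q : Q} {r : R} (h : f s * q = f r) :
    q = ↑(hf.isUnit s hs).unit⁻¹ * f r := by
  rw [← h, ← mul_assoc, IsUnit.val_inv_mul, one_mul]

lemma mul_inv_mul_mem [IsNoetherianRing Q] (hP : IsIdealSet P) {a b s : R} (hs : s ∈ S)
    (h : ∀ r, a * r * b ∈ f ⁻¹' P) : f a * ↑(hf.isUnit s hs).unit⁻¹ * f b ∈ P := by
  refine Submodule.span_induction (p := fun y _ => y * f b ∈ P) ?_ (by simpa using hP.zero_mem)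
    (fun _ _ _ _ h₁ h₂ => by simpa [add_mul] using hP.add_mem h₁ h₂)
    (fun q _ _ hy => by simpa [mul_assoc] using hP.mul_mem_left q hy)
    (mul_inv_mem_span_mul_pow (f a) (hf.isUnit s hs).unit)
  rintro _ ⟨k, rfl⟩
  simpa [mul_assoc] using h (s ^ k)

lemma isPrimeIdealSet_preimage [IsNoetherianRing Q] (hP : IsPrimeIdealSet P) :
    IsPrimeIdealSet (f ⁻¹' P) := by
  refine isPrimeIdealSet_of_forall_mem_or_mem (hP.1.preimage f) (by simpa using hP.one_notMem)
    fun a b h => hP.mem_or_mem fun q => ?_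
  obtain ⟨s, hs, r, hq⟩ := hf.surj q
  rw [hf.eq_inv_mul hs hq, ← mul_assoc, mul_assoc _ (f r), ← map_mul]
  exact hf.mul_inv_mul_mem hP.1 hs fun r' => by simpa [mul_assoc] using h (r' * r)

lemma preimage_inter_eq_empty (hP : IsIdealSet P) (h1 : (1 : Q) ∉ P) : f ⁻¹' P ∩ S = ∅ :=
  Set.eq_empty_of_forall_notMem fun s ⟨hsP, hs⟩ => h1 <| by
    simpa using hP.mul_mem_right (↑(hf.isUnit s hs).unit⁻¹) hsP

lemma locSet_preimage (hP : IsIdealSet P) : locSet f S (f ⁻¹' P) = P := by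
  ext q
  refine ⟨fun ⟨s, hs, a, ha, hq⟩ => hf.eq_inv_mul hs hq ▸ hP.mul_mem_left _ ha, fun hq => ?_⟩
  obtain ⟨s, hs, r, hsq⟩ := hf.surj q
  exact ⟨s, hs, r, by simpa [← hsq] using hP.mul_mem_left (f s) hq, hsq⟩

variable [IsNoetherianRing Q] (hinj : Function.Injective f)
include hinj

lemma isMinimalPrimeIdealSet_preimage (hP : IsMinimalPrimeIdealSet P) :
    IsMinimalPrimeIdealSet (f ⁻¹' P) := by
  refine ⟨hf.isPrimeIdealSet_preimage hP.1, fun p hp hpP => hpP.antisymm ?_⟩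
  obtain ⟨P', hP', hP'p⟩ := exists_preimage_subset_of_injective hinj hp
  have hP'P : P' ⊆ P := by
    simpa only [hf.locSet_preimage hP'.1, hf.locSet_preimage hP.1.1] using
      locSet_mono (f := f) (S := S) (hP'p.trans hpP)
  exact hP.2 P' hP' hP'P ▸ hP'p

lemma isMinimalPrimeIdealSet_locSet {p : Set R} (hp : IsMinimalPrimeIdealSet p) :
    IsMinimalPrimeIdealSet (locSet f S p) := by
  obtain ⟨P, hP, hPp⟩ := exists_preimage_subset_of_injective hinj hp.1
  obtain rfl : f ⁻¹' P = p := hp.2 _ (hf.isPrimeIdealSet_preimage hP) hPp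
  rw [hf.locSet_preimage hP.1]
  refine ⟨hP, fun P' hP' hP'P => ?_⟩
  rw [← hf.locSet_preimage hP'.1, ← hf.locSet_preimage hP.1,
    hp.2 _ (hf.isPrimeIdealSet_preimage hP') (Set.preimage_mono hP'P)]

end IsLeftLocalization

end Localization

theorem statement5_general {R Q : Type*} [Ring R] [Ring Q]
    {S : Set R} (hSl : IsLeftDenominatorSet S)
    (hass : lAss S = ({0} : Set R))
    (f : R →+* Q) (hf : IsLeftLocalization S f)
    [IsNoetherianRing Q] :
    minPrimes Q = locSet f S '' {p : Set R | IsMinimalPrimeIdealSet p ∧ p ∩ S = ∅} ∧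
    {p : Set R | IsMinimalPrimeIdealSet p ∧ p ∩ S = ∅}.Nonempty := by
  have hinj := hf.injective hass
  have hmin : minPrimes Q = locSet f S '' {p | IsMinimalPrimeIdealSet p ∧ p ∩ S = ∅} := by
    ext P
    refine ⟨fun hP => ⟨f ⁻¹' P, ⟨hf.isMinimalPrimeIdealSet_preimage hinj hP,
      hf.preimage_inter_eq_empty hP.1.1 hP.1.one_notMem⟩, hf.locSet_preimage hP.1.1⟩, ?_⟩
    rintro ⟨p, ⟨hp, -⟩, rfl⟩
    exact hf.isMinimalPrimeIdealSet_locSet hinj hp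
  have := hf.nontrivial hSl.1 hass
  exact ⟨hmin, (hmin ▸ minPrimes_nonempty : (locSet f S '' _).Nonempty).of_image⟩

/-- If `R` is right Noetherian, `S ∈ Den(R, 0)` and `S⁻¹R` is
left Noetherian, then `min(S⁻¹R) = { S⁻¹𝔭 | 𝔭 ∈ min(R,S) }`; in particular
`min(R,S) ≠ ∅`. -/
theorem statement5 {R Q : Type*} [Ring R] [Ring Q]
    [IsNoetherianRing Rᵐᵒᵖ]
    {S : Set R} (hSl : IsLeftDenominatorSet S) (hSr : IsRightDenominatorSet S)
    (hass : lAss S = ({0} : Set R))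
    (f : R →+* Q) (hf : IsLeftLocalization S f)
    [IsNoetherianRing Q] :
    minPrimes Q = locSet f S '' {p : Set R | IsMinimalPrimeIdealSet p ∧ p ∩ S = ∅} ∧
    {p : Set R | IsMinimalPrimeIdealSet p ∧ p ∩ S = ∅}.Nonempty :=
  statement5_general hSl hass f hf

end BavulaMinPrimes
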